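/- Define polynomials A(m) ∈ ℤ[x] by A(0)=1, A(1)=1+x+x², A(2)=1+x+x²+2x³+x⁴, A(3)=1+2x+3x²+3x³+3x⁴+3x⁵+x⁶, and the relations A(m)=B(m−1)+x²A(m−1) for m ≥ 3 and B(m)=x·A(m)+B(m−1) for m ≥ 2, where B(0)=1+x, B(1)=1+x+x²+x³, B(2)=1+2x+2x²+2x³+2x⁴+x⁵. Then for all m ≥ 4, A(m) = (1+x+x²)·A(m−1) − x²·A(m−2). -/

import Mathlib

open Polynomial

noncomputable def AB : ℕ → Polynomial ℤ × Polynomial ℤ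
  | 0 => (1, 1 + X)
  | 1 => (1 + X + X ^ 2, 1 + X + X ^ 2 + X ^ 3)
  | 2 => (1 + X + X ^ 2 + 2 * X ^ 3 + X ^ 4,
          1 + 2 * X + 2 * X ^ 2 + 2 * X ^ 3 + 2 * X ^ 4 + X ^ 5)
  | (m + 3) =>
      let prev := AB (m + 2)
      let A := prev.2 + X ^ 2 * prev.1
      (A, X * A + prev.2)

noncomputable def A (m : ℕ) : Polynomial ℤ := (AB m).1

/-- The first recurrence gives `b n = a (n + 1) - x ^ 2 * a n`; substituting this into the second
eliminates `b`. -/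
theorem eq_sub_of_coupled_recurrences {R : Type*} [CommRing R] (x : R) (a b : ℕ → R)
    (ha : ∀ n, a (n + 1) = b n + x ^ 2 * a n) (hb : ∀ n, b (n + 1) = x * a (n + 1) + b n)
    (n : ℕ) : a (n + 2) = (1 + x + x ^ 2) * a (n + 1) - x ^ 2 * a n := by
  have hb_eq : b n = a (n + 1) - x ^ 2 * a n := eq_sub_of_add_eq (ha n).symm
  calc a (n + 2) = b (n + 1) + x ^ 2 * a (n + 1) := ha (n + 1)
    _ = x * a (n + 1) + b n + x ^ 2 * a (n + 1) := by rw [hb n]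
    _ = (1 + x + x ^ 2) * a (n + 1) - x ^ 2 * a n := by rw [hb_eq]; ring

noncomputable def B (m : ℕ) : Polynomial ℤ := (AB m).2

theorem A_add_three (m : ℕ) : A (m + 3) = B (m + 2) + X ^ 2 * A (m + 2) := rfl

theorem B_add_three (m : ℕ) : B (m + 3) = X * A (m + 3) + B (m + 2) := rfl

theorem A_recurrence (m : ℕ) (hm : 4 ≤ m) :
    A m = (1 + X + X ^ 2) * A (m - 1) - X ^ 2 * A (m - 2) := by
  obtain ⟨n, rfl⟩ : ∃ n, m = n + 4 := ⟨m - 4, by omega⟩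
  exact eq_sub_of_coupled_recurrences X (fun n ↦ A (n + 2)) (fun n ↦ B (n + 2))
    A_add_three B_add_three n
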